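/- Let F: 𝒢 → ℋ be a functor between finite groupoids, V a rational vector space, and f: π₀(𝒢) → V a function. Then ∫_𝒢 f = ∫_ℋ (F_* f). -/

import Mathlib

/-!
Group the components of `(F ↓ d)` by the component `[c]` of `C` below them. Those over `[c]`
are the orbits of `Aut c` acting on `F c ⟶ d` by precomposition, and the automorphism group of
`(c, φ)` in `(F ↓ d)` is the stabiliser of `φ`; by orbit–stabiliser their orbisum is
`|F c ⟶ d| / |Aut c|`. Hence
`∫_D F_* f = ∑_[c] f(c) / |Aut c| · ∑_[d] |F c ⟶ d| / |Aut d|`,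
and the inner sum is `1`: only `d ≅ F c` contributes, and then `|F c ⟶ d| = |Aut d|`.
-/

open CategoryTheory

/-- The set of isomorphism classes of objects of a category. -/
abbrev PiZero (C : Type*) [Category C] := Quotient (isIsomorphicSetoid C)

/-- The orbisum `∫_C f = ∑_{[x]} f(x)/|Aut(x)|` of a vector-valued function on
isomorphism classes. -/
noncomputable def orbisum {C : Type*} [Category C] {V : Type*} [AddCommGroup V] [Module ℚ V]
    (f : PiZero C → V) : V :=
  ∑ᶠ c : PiZero C, ((Nat.card (Aut (Quotient.out c)) : ℚ))⁻¹ • f c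

/-- The push-forward `F_* f`, defined by orbisums over comma categories `(F ↓ h)`. -/
noncomputable def pushforward {C D : Type*} [Category C] [Category D] (F : C ⥤ D)
    {V : Type*} [AddCommGroup V] [Module ℚ V] (f : PiZero C → V) : PiZero D → V :=
  fun h => orbisum (fun c : PiZero (CostructuredArrow F (Quotient.out h)) =>
    f (Quotient.mk (isIsomorphicSetoid C) (Quotient.out c).left))

attribute [local instance] isIsomorphicSetoid

namespace PiZero

variable {C : Type*} [Category C]

theorem mk_eq_mk_iff {x y : C} : (⟦x⟧ : PiZero C) = ⟦y⟧ ↔ Nonempty (x ≅ y) :=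
  Quotient.eq

theorem nonempty_out_iso (x : C) : Nonempty ((⟦x⟧ : PiZero C).out ≅ x) := Quotient.mk_out x

end PiZero

namespace CategoryTheory

variable {C D : Type*} [Category C] [Category D]

abbrev Functor.autPrecompAction (F : C ⥤ D) (c : C) (d : D) :
    MulAction (Aut c) (F.obj c ⟶ d) where
  smul α φ := F.map α.inv ≫ φ
  one_smul φ := show F.map (𝟙 c) ≫ φ = φ by simp
  mul_smul α β φ :=
    show F.map (α.inv ≫ β.inv) ≫ φ = F.map α.inv ≫ F.map β.inv ≫ φ by simp

attribute [local instance] Functor.autPrecompAction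

namespace CostructuredArrow

variable {F : C ⥤ D} {c : C} {d : D}

lemma nonempty_mk_iso_mk_iff {φ ψ : F.obj c ⟶ d} :
    Nonempty (mk φ ≅ mk ψ) ↔ ψ ∈ MulAction.orbit (Aut c) φ := by
  constructor
  · rintro ⟨η⟩
    exact ⟨(proj F d).mapIso η, w η.inv⟩
  · rintro ⟨α, rfl⟩
    exact ⟨isoMk α ((F.mapIso α).hom_inv_id_assoc φ)⟩

def autMkEquivStabilizer (φ : F.obj c ⟶ d) :
    Aut (mk φ) ≃ MulAction.stabilizer (Aut c) φ where
  toFun η := ⟨(proj F d).mapIso η, w η.inv⟩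
  invFun α := isoMk α.1 ((Iso.inv_comp_eq (F.mapIso α.1)).1 α.2).symm
  left_inv η := by ext; rfl
  right_inv α := by ext; rfl

theorem natCard_fiber_mul_natCard_aut (e : CostructuredArrow F d) (γ : c ≅ e.left) :
    Nat.card {φ : F.obj c ⟶ d // (⟦mk φ⟧ : PiZero _) = ⟦e⟧} * Nat.card (Aut e)
      = Nat.card (Aut c) := by
  set φ₀ := F.map γ.hom ≫ e.hom
  have η : mk φ₀ ≅ e := isoMk γ
  have hfiber :
      {φ : F.obj c ⟶ d // (⟦mk φ⟧ : PiZero _) = ⟦e⟧} ≃ MulAction.orbit (Aut c) φ₀ :=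
    Equiv.subtypeEquivRight fun φ => by
      rw [← nonempty_mk_iso_mk_iff, PiZero.mk_eq_mk_iff]
      exact ⟨fun ⟨θ⟩ => ⟨η ≪≫ θ.symm⟩, fun ⟨θ⟩ => ⟨θ.symm ≪≫ η⟩⟩
  rw [Nat.card_congr hfiber, Nat.card_congr ((Iso.conjAut η).toEquiv.symm.trans
    (autMkEquivStabilizer φ₀)), ← Nat.card_prod,
    Nat.card_congr (MulAction.orbitProdStabilizerEquivGroup (Aut c) φ₀)]

open Finset in
theorem sum_inv_natCard_aut_over_eq [DecidableEq (PiZero C)]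
    [Fintype (PiZero (CostructuredArrow F d))] [Finite (F.obj c ⟶ d)] [Finite (Aut c)] :
    ∑ e : PiZero (CostructuredArrow F d) with (⟦e.out.left⟧ : PiZero C) = ⟦c⟧,
        (Nat.card (Aut e.out) : ℚ)⁻¹ = Nat.card (F.obj c ⟶ d) / Nat.card (Aut c) := by
  classical
  have := Fintype.ofFinite (F.obj c ⟶ d)
  have hq (φ : F.obj c ⟶ d) :
      (⟦(⟦mk φ⟧ : PiZero (CostructuredArrow F d)).out.left⟧ : PiZero C) = ⟦c⟧ :=
    PiZero.mk_eq_mk_iff.2 ⟨(proj F d).mapIso (PiZero.nonempty_out_iso (mk φ)).some⟩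
  have hfiber (e : PiZero (CostructuredArrow F d)) (he : (⟦e.out.left⟧ : PiZero C) = ⟦c⟧) :
      (Nat.card (Aut e.out) : ℚ)⁻¹
        = #{φ : F.obj c ⟶ d | (⟦mk φ⟧ : PiZero _) = e} / Nat.card (Aut c) := by
    obtain ⟨γ⟩ := PiZero.mk_eq_mk_iff.1 he.symm
    have hcard := natCard_fiber_mul_natCard_aut e.out γ
    rw [Quotient.out_eq, Nat.card_eq_fintype_card, Fintype.card_subtype] at hcard
    have hc : Nat.card (Aut c) ≠ 0 := Nat.card_pos.ne'
    have he : Nat.card (Aut e.out) ≠ 0 := right_ne_zero_of_mul (hcard ▸ hc)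
    rw [eq_div_iff (by exact_mod_cast hc), ← hcard, Nat.cast_mul, mul_comm,
      mul_inv_cancel_right₀ (by exact_mod_cast he)]
  rw [sum_congr rfl fun e he => hfiber e (mem_filter.1 he).2, ← sum_div, ← Nat.cast_sum,
    ← card_eq_sum_card_fiberwise fun φ _ => by simp [hq], card_univ,
    Nat.card_eq_fintype_card (α := F.obj c ⟶ d)]

theorem finite_piZero [Finite (PiZero C)] [∀ c : C, Finite (F.obj c ⟶ d)] :
    Finite (PiZero (CostructuredArrow F d)) := by
  refine Finite.of_surjective
    (fun p : Σ c : PiZero C, F.obj c.out ⟶ d => (⟦mk p.2⟧ : PiZero _)) fun e => ?_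
  obtain ⟨γ⟩ := PiZero.nonempty_out_iso e.out.left
  exact ⟨⟨⟦e.out.left⟧, F.map γ.hom ≫ e.out.hom⟩,
    (PiZero.mk_eq_mk_iff.2 ⟨isoMk γ⟩).trans e.out_eq⟩

end CostructuredArrow

namespace Groupoid

variable {C : Type*} [Groupoid C]

theorem natCard_hom_eq_natCard_aut {x y : C} (ψ : x ⟶ y) :
    Nat.card (x ⟶ y) = Nat.card (Aut y) :=
  Nat.card_congr ((Iso.homCongr (asIso ψ) (Iso.refl y)).trans (isoEquivHom y y).symm)

theorem finite_hom [∀ y : C, Finite (Aut y)] (x y : C) : Finite (x ⟶ y) := by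
  rcases isEmpty_or_nonempty (x ⟶ y) with _ | ⟨⟨ψ⟩⟩
  · infer_instance
  · exact Nat.finite_of_card_ne_zero ((natCard_hom_eq_natCard_aut ψ).trans_ne Nat.card_pos.ne')

theorem orbisum_natCard_hom_eq_one [∀ y : C, Finite (Aut y)] (x : C) :
    orbisum (fun y : PiZero C => (Nat.card (x ⟶ y.out) : ℚ)) = 1 := by
  rw [orbisum, finsum_eq_single _ ⟦x⟧]
  · obtain ⟨δ⟩ := PiZero.nonempty_out_iso x
    rw [smul_eq_mul, natCard_hom_eq_natCard_aut δ.inv,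
      inv_mul_cancel₀ (Nat.cast_ne_zero.2 Nat.card_pos.ne')]
  · intro y hy
    have : IsEmpty (x ⟶ y.out) :=
      ⟨fun ψ => hy ((PiZero.mk_eq_mk_iff.2 ⟨asIso ψ⟩).trans y.out_eq).symm⟩
    simp

end Groupoid
end CategoryTheory

theorem pushforward_apply_eq_sum {C D : Type*} [Category C] [Category D] {V : Type*}
    [AddCommGroup V] [Module ℚ V] (F : C ⥤ D) [Fintype (PiZero C)] [∀ c : C, Finite (Aut c)]
    [∀ (c : C) (d : D), Finite (F.obj c ⟶ d)] (f : PiZero C → V) (d : PiZero D) :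
    pushforward F f d
      = ∑ c, ((Nat.card (F.obj c.out ⟶ d.out) : ℚ) / Nat.card (Aut c.out)) • f c := by
  classical
  have := CostructuredArrow.finite_piZero (F := F) (d := d.out)
  have := Fintype.ofFinite (PiZero (CostructuredArrow F d.out))
  rw [pushforward, orbisum, finsum_eq_sum_of_fintype,
    ← Finset.sum_fiberwise Finset.univ fun e => (⟦e.out.left⟧ : PiZero C)]
  refine Finset.sum_congr rfl fun c _ => ?_
  have hfiber := CostructuredArrow.sum_inv_natCard_aut_over_eq (F := F) (d := d.out) (c := c.out)
  rw [c.out_eq] at hfiber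
  rw [Finset.sum_congr rfl fun e he => by rw [(Finset.mem_filter.1 he).2], ← Finset.sum_smul,
    hfiber]

/-- Orbisums are preserved by push-forward: `∫_C f = ∫_D (F_* f)`. -/
theorem orbisum_pushforward {C D : Type*} [Groupoid C] [Groupoid D]
    (hC : Finite (PiZero C)) (hCa : ∀ x : C, Finite (Aut x))
    (hD : Finite (PiZero D)) (hDa : ∀ y : D, Finite (Aut y))
    {V : Type*} [AddCommGroup V] [Module ℚ V]
    (F : C ⥤ D) (f : PiZero C → V) :
    orbisum f = orbisum (pushforward F f) := by
  have : ∀ x y : D, Finite (x ⟶ y) := Groupoid.finite_hom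
  have := Fintype.ofFinite (PiZero C)
  have := Fintype.ofFinite (PiZero D)
  have hunit (c : PiZero C) : ∑ d : PiZero D,
      (Nat.card (Aut d.out) : ℚ)⁻¹ * Nat.card (F.obj c.out ⟶ d.out) = 1 := by
    simpa [orbisum, finsum_eq_sum_of_fintype] using
      Groupoid.orbisum_natCard_hom_eq_one (F.obj c.out)
  calc orbisum f = ∑ c, (Nat.card (Aut c.out) : ℚ)⁻¹ • f c := finsum_eq_sum_of_fintype _
    _ = ∑ c, ∑ d : PiZero D, (Nat.card (Aut d.out) : ℚ)⁻¹ •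
          ((Nat.card (F.obj c.out ⟶ d.out) : ℚ) / Nat.card (Aut c.out)) • f c := by
      refine Finset.sum_congr rfl fun c _ => ?_
      simp_rw [smul_smul, ← Finset.sum_smul, ← mul_div_assoc, ← Finset.sum_div, hunit,
        one_div]
    _ = ∑ d : PiZero D, (Nat.card (Aut d.out) : ℚ)⁻¹ • pushforward F f d := by
      rw [Finset.sum_comm]
      simp_rw [pushforward_apply_eq_sum, Finset.smul_sum]
    _ = orbisum (pushforward F f) := (finsum_eq_sum_of_fintype _).symm
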